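/- Let α be an alternating p-form on V, let Ω be an alternating n-form on V, let W^I be real numbers for I ∈ Inc(p,n), and define the operator i_W = (1/p!) Σ_{I ∈ Inc(p,n)} W^I · i_{X_{I_p}} ∘ ⋯ ∘ i_{X_{I_1}}. Then (i_W α) · Ω = α ∧ (i_W Ω), i.e. the scalar i_W α times the n-form Ω equals the wedge product of α with the (n−p)-form i_W Ω. -/

import Mathlib

/- Setting: `V` is an `n`-dimensional real vector space with basis `X_1, …, X_n`
(`b : Basis (Fin n) ℝ V`) and dual basis `e^1, …, e^n` (`b.coord`).  `Λ^p V*` is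
modelled by `AlternatingMap ℝ V ℝ (Fin p)`, with the wedge product in the
shuffle (determinant) convention and interior contraction
`(i_v α)(v₁,…,v_{p-1}) = α (v, v₁, …, v_{p-1})`. -/

open scoped TensorProduct

noncomputable section

namespace SEM

variable {V : Type*} [AddCommGroup V] [Module ℝ V]

/-- Alternating `p`-forms on `V`. -/
abbrev Form (V : Type*) [AddCommGroup V] [Module ℝ V] (p : ℕ) := V [⋀^Fin p]→ₗ[ℝ] ℝ

/-- The wedge product of alternating forms (shuffle/determinant convention). -/
noncomputable def wedge {p q : ℕ} (α : Form V p) (β : Form V q) : Form V (p + q) :=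
  AlternatingMap.domDomCongr finSumFinEquiv
    ((TensorProduct.lid ℝ ℝ).toLinearMap.compAlternatingMap (α.domCoprod β))

/-- Re-indexing an alternating form along an equality of degrees. -/
def castF {m k : ℕ} (h : m = k) (α : Form V m) : Form V k :=
  AlternatingMap.domDomCongr (finCongr h) α

/-- A linear functional regarded as an alternating 1-form. -/
def oneForm (f : Module.Dual ℝ V) : Form V 1 :=
  AlternatingMap.ofSubsingleton ℝ V ℝ 0 f

/-- Interior contraction `i_v`: `(icontr v α) (v₁,…,v_p) = α (v, v₁, …, v_p)`. -/
def icontr {p : ℕ} (v : V) (α : Form V (p + 1)) : Form V p :=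
  α.curryLeft v

/-- Iterated interior contraction `i_J = i_{J_r} ∘ ⋯ ∘ i_{J_1}` with the first entry of
the list `J` contracted first, so that
`(icontrFam J α) (w₁,…) = α (J 1, J 2, …, J r, w₁, …)`. -/
def icontrFam {p : ℕ} : {r : ℕ} → (J : Fin r → V) → Form V (p + r) → Form V p
  | 0, _, α => α
  | _ + 1, J, α => icontrFam (fun i => J i.succ) (icontr (J 0) α)

/-- The composite operator `i_{v_1} ∘ i_{v_2} ∘ ⋯ ∘ i_{v_q}` (the last entry of `v`
is contracted first). -/
def icontrComp : {p q : ℕ} → (v : Fin q → V) → Form V (p + q) → Form V p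
  | _, 0, _, α => α
  | p, q + 1, v, α =>
      icontr (v 0) (icontrComp (p := p + 1) (fun i => v i.succ) (castF (by omega) α))

/-- The wedge `e^{I_1} ∧ ⋯ ∧ e^{I_r}` of a family of `1`-forms. -/
def eFam : {r : ℕ} → (Fin r → Module.Dual ℝ V) → Form V r
  | 0, _ => AlternatingMap.constOfIsEmpty ℝ V (Fin 0) 1
  | r + 1, f => castF (Nat.add_comm 1 r) (wedge (oneForm (f 0)) (eFam fun i => f i.succ))

/-- Strict monotonicity is decidable, so that the set `Inc(r,n)` of strictly increasing
lists `(I_1 < ⋯ < I_r)` with entries in `{1,…,n}`, modelled as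
`{I : Fin r → Fin n // StrictMono I}`, is a finite type. -/
instance {r n : ℕ} : DecidablePred (StrictMono : (Fin r → Fin n) → Prop) := fun _ =>
  decidable_of_iff (∀ a b, a < b → _ < _) Iff.rfl

/-- The sign `ε(Î)` of the permutation sorting the free list `Î` into increasing order,
equal to `0` when `Î` has a repeated entry. -/
def eps {m n : ℕ} (f : Fin m → Fin n) : ℤ :=
  if Function.Injective f then (Equiv.Perm.sign (Tuple.sort f) : ℤ) else 0

end SEM

/-!
Both sides are top-degree forms, so it suffices to compare them on the basis `X`, and by
linearity in `W` to treat a single increasing `I`. Complete `I` to a bijection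
`e : Fin p ⊕ Fin (n - p) ≃ Fin n` and evaluate on the reordered basis `X ∘ e`; both sides
pick up the sign of the same permutation. In the shuffle expansion of
`(α ∧ i_{X_I} Ω)(X ∘ e)`, every shuffle that moves some `X_{I_k}` into an argument slot of
`i_{X_I} Ω` makes `Ω` see a repeated vector, so only the trivial shuffle survives, and it
contributes `α(X_I) · Ω(X ∘ e)`.
-/

theorem AlternatingMap.domCoprod_apply_eq_tmul {ιa ιb : Type*} [Fintype ιa] [Fintype ιb]
    [DecidableEq ιa] [DecidableEq ιb] {R : Type*} {M N₁ N₂ : Type*} [CommSemiring R]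
    [AddCommGroup N₁] [Module R N₁] [AddCommGroup N₂] [Module R N₂] [AddCommMonoid M]
    [Module R M] (a : M [⋀^ιa]→ₗ[R] N₁) (b : M [⋀^ιb]→ₗ[R] N₂) (v : ιa ⊕ ιb → M)
    (hb : ∀ (u : ιb → M) (i : ιa) (j : ιb), u j = v (Sum.inl i) → b u = 0) :
    a.domCoprod b v = a (v ∘ Sum.inl) ⊗ₜ b (v ∘ Sum.inr) := by
  rw [domCoprod_apply, _root_.sum_apply]
  refine (Fintype.sum_eq_single (Quotient.mk'' 1) fun σ hσ => ?_).trans ?_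
  swap
  · simp only [domCoprod.summand_mk'', Equiv.Perm.sign_one, one_smul,
      MultilinearMap.domDomCongr_apply, Equiv.Perm.coe_one, id_eq,
      MultilinearMap.domCoprod_apply, coe_multilinearMap]
    rfl
  induction σ using Quotient.inductionOn' with | h τ => ?_
  -- otherwise `τ` preserves the block `ιb`, so it lies in the trivial coset
  obtain ⟨j, i, hji⟩ : ∃ j i, τ (Sum.inr j) = Sum.inl i := by
    by_contra! hτ
    refine hσ ((QuotientGroup.eq (s := (Equiv.Perm.sumCongrHom ιa ιb).range)).mpr ?_)
    refine mul_mem (inv_mem ?_) (one_mem _)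
    refine Equiv.Perm.mem_sumCongrHom_range_of_perm_mapsTo_inl
      ((Equiv.Perm.perm_mapsTo_inl_iff_mapsTo_inr τ).mpr ?_)
    rintro _ ⟨j, rfl⟩
    cases h : τ (Sum.inr j) with
    | inl i => exact absurd h (hτ j i)
    | inr k => exact ⟨k, rfl⟩
  rw [domCoprod.summand_mk'', _root_.smul_apply, MultilinearMap.domDomCongr_apply,
    MultilinearMap.domCoprod_apply, coe_multilinearMap, coe_multilinearMap,
    hb _ i j (by simp [hji]), TensorProduct.tmul_zero, smul_zero]

theorem AlternatingMap.eq_of_apply_basis {R M ι : Type*} [CommRing R] [AddCommGroup M]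
    [Module R M] [Fintype ι] [DecidableEq ι] (b : Module.Basis ι R M)
    {f g : M [⋀^ι]→ₗ[R] R} (h : f b = g b) : f = g := by
  rw [f.eq_smul_basis_det b, g.eq_smul_basis_det b, h]

theorem Function.Injective.exists_sumEquiv_inl_eq {α β γ : Type*} [Fintype α] [Fintype β]
    [Fintype γ] {f : α → β} (hf : Function.Injective f)
    (hcard : Fintype.card α + Fintype.card γ = Fintype.card β) :
    ∃ e : α ⊕ γ ≃ β, ∀ a, e (Sum.inl a) = f a := by
  classical
  have : Fintype.card γ = Fintype.card ((Set.range f)ᶜ : Set β) := by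
    rw [Fintype.card_compl_set, Set.card_range_of_injective hf]
    omega
  exact ⟨(Equiv.sumCongr (Equiv.ofInjective f hf) (Fintype.equivOfCardEq this)).trans
    (Equiv.Set.sumCompl _), fun a => rfl⟩

namespace SEM

variable {V : Type*} [AddCommGroup V] [Module ℝ V]

theorem castF_apply {m k : ℕ} (h : m = k) (α : Form V m) (v : Fin k → V) :
    castF h α v = α (v ∘ Fin.cast h) := rfl

theorem icontrFam_apply {m : ℕ} : ∀ {r : ℕ} (J : Fin r → V) (γ : Form V (m + r))
    (u : Fin m → V), icontrFam J γ u = γ (Fin.append J u ∘ Fin.cast (Nat.add_comm m r))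
  | 0, J, γ, u => by
    simp only [Fin.append_left_nil _ _ rfl]
    rfl
  | r + 1, J, γ, u => by
    rw [icontrFam, icontrFam_apply, icontr, AlternatingMap.curryLeft_apply_apply]
    conv_rhs => rw [← Fin.cons_self_tail J, Fin.append_cons]
    congr 1
    funext i
    exact Fin.cases rfl (fun _ => rfl) i

theorem castF_smul {m k : ℕ} (h : m = k) (c : ℝ) (α : Form V m) :
    castF h (c • α) = c • castF h α :=
  map_smul (AlternatingMap.domDomCongrₗ ℝ (finCongr h)) c α

theorem castF_sum {m k : ℕ} (h : m = k) {ι : Type*} (s : Finset ι) (α : ι → Form V m) :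
    castF h (∑ i ∈ s, α i) = ∑ i ∈ s, castF h (α i) :=
  map_sum (AlternatingMap.domDomCongrₗ ℝ (finCongr h)) α s

theorem icontrFam_zero_apply {r : ℕ} (J : Fin r → V) (γ : Form V r) :
    icontrFam (p := 0) J (castF (Nat.zero_add r).symm γ) (fun i => i.elim0) = γ J := by
  rw [icontrFam_apply, castF_apply, Fin.append_elim0]
  rfl

theorem icontrFam_apply_eq_zero {m r : ℕ} (J : Fin r → V) (γ : Form V (m + r))
    (u : Fin m → V) {i : Fin r} {j : Fin m} (h : J i = u j) : icontrFam J γ u = 0 := by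
  rw [icontrFam_apply]
  refine γ.map_eq_zero_of_eq _ (i := Fin.cast (Nat.add_comm r m) (Fin.castAdd m i))
    (j := Fin.cast (Nat.add_comm r m) (Fin.natAdd r j)) ?_ ?_
  · simpa using h
  · simp only [Fin.cast_natAdd, ne_eq, Fin.ext_iff, Fin.val_cast, Fin.val_castAdd,
      Fin.val_addNat]
    omega

@[simps]
def wedgeLeft {p q : ℕ} (α : Form V p) : Form V q →ₗ[ℝ] Form V (p + q) where
  toFun := wedge α
  map_add' β γ := by
    ext v
    simp [wedge, ← AlternatingMap.domCoprod'_apply, TensorProduct.tmul_add]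
  map_smul' c β := by
    ext v
    simp [wedge, ← AlternatingMap.domCoprod'_apply, TensorProduct.tmul_smul]

theorem wedge_icontrFam_apply {n p q : ℕ} (h : n = q + p) (h' : p + q = n)
    (α : Form V p) (Ω : Form V n) (v : Fin n → V) {I : Fin p → Fin n}
    (hI : Function.Injective I) :
    wedge α (icontrFam (fun s => v (I s)) (castF h Ω)) (v ∘ Fin.cast h')
      = α (fun s => v (I s)) * Ω v := by
  obtain ⟨e, he⟩ := hI.exists_sumEquiv_inl_eq (γ := Fin q) (by simp [h'])
  set β := icontrFam (fun s => v (I s)) (castF h Ω)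
  set ρ : Equiv.Perm (Fin n) := (finCongr h').symm.trans (finSumFinEquiv.symm.trans e)
  have hρ : ∀ x, ρ (Fin.cast h' (finSumFinEquiv x)) = e x := by simp [ρ]
  have hβ : β (fun j => v (e (Sum.inr j))) = Ω (v ∘ ρ) := by
    rw [icontrFam_apply, castF_apply]
    congr 1
    funext k
    obtain ⟨x, rfl⟩ : ∃ x, Fin.cast h' (finSumFinEquiv x) = k :=
      ⟨finSumFinEquiv.symm (Fin.cast h'.symm k), by simp⟩
    simp only [Function.comp_apply, hρ]
    rcases x with i | j <;> simp [he]
  have hβ_zero : ∀ (u : Fin q → V) (i : Fin p) (j : Fin q),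
      u j = (v ∘ e) (Sum.inl i) → β u = 0 := fun u i j hij =>
    icontrFam_apply_eq_zero _ _ _ (i := i) (j := j) (by simp [hij, he])
  have hwedge : castF h' (wedge α β) (v ∘ ρ) = α (fun s => v (I s)) * Ω (v ∘ ρ) := by
    have hv : ((v ∘ ρ) ∘ Fin.cast h') ∘ finSumFinEquiv = v ∘ e := by
      funext x
      simp only [Function.comp_apply, hρ]
    rw [castF_apply, wedge, AlternatingMap.domDomCongr_apply,
      LinearMap.compAlternatingMap_apply, hv, α.domCoprod_apply_eq_tmul β _ hβ_zero,
      LinearEquiv.coe_coe, TensorProduct.lid_tmul, smul_eq_mul, ← hβ]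
    congr 2
    funext s
    exact congrArg v (he s)
  rw [AlternatingMap.map_perm, AlternatingMap.map_perm, mul_smul_comm] at hwedge
  exact smul_left_cancel _ hwedge

theorem castF_wedge_icontrFam {n p q : ℕ} (h : n = q + p) (h' : p + q = n)
    (b : Module.Basis (Fin n) ℝ V) (α : Form V p) (Ω : Form V n) {I : Fin p → Fin n}
    (hI : Function.Injective I) :
    castF h' (wedge α (icontrFam (fun s => b (I s)) (castF h Ω)))
      = α (fun s => b (I s)) • Ω :=
  AlternatingMap.eq_of_apply_basis b (wedge_icontrFam_apply h h' α Ω b hI)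

end SEM

/-- Let `α` be an alternating `p`-form and `Ω` an alternating `n`-form
on the `n`-dimensional space `V`, let `W^I` be real numbers for `I ∈ Inc(p,n)` and let
`i_W = (1/p!) Σ_{I ∈ Inc(p,n)} W^I i_{X_{I_p}} ∘ ⋯ ∘ i_{X_{I_1}}`.  Then
`(i_W α) • Ω = α ∧ (i_W Ω)`: the scalar `i_W α` times `Ω` equals the wedge of `α` with
the `(n-p)`-form `i_W Ω`. -/
theorem statement10 {V : Type*} [AddCommGroup V] [Module ℝ V] {n p : ℕ} (hpn : p ≤ n)
    (b : Module.Basis (Fin n) ℝ V) (α : SEM.Form V p) (Ω : SEM.Form V n)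
    (W : {I : Fin p → Fin n // StrictMono I} → ℝ) :
    ((p.factorial : ℝ)⁻¹ *
        ∑ I : {I : Fin p → Fin n // StrictMono I},
          W I * SEM.icontrFam (p := 0) (fun s => b (I.1 s))
            (SEM.castF (Nat.zero_add p).symm α) (fun i => i.elim0)) • Ω
      = SEM.castF (by omega : p + (n - p) = n)
          (SEM.wedge α
            ((p.factorial : ℝ)⁻¹ •
              ∑ I : {I : Fin p → Fin n // StrictMono I},
                W I • SEM.icontrFam (fun s => b (I.1 s))
                  (SEM.castF (by omega : n = (n - p) + p) Ω))) := by
  rw [← SEM.wedgeLeft_apply, map_smul, map_sum, SEM.castF_smul, SEM.castF_sum]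
  simp only [map_smul, SEM.castF_smul, SEM.wedgeLeft_apply, SEM.icontrFam_zero_apply,
    fun I : {I : Fin p → Fin n // StrictMono I} =>
      SEM.castF_wedge_icontrFam (q := n - p) (by omega) (by omega) b α Ω I.2.injective]
  simp only [mul_smul, Finset.sum_smul]
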